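/- arXiv:1510.04312 — 2 statements merged into one kernel-verified Lean document; each statement's English description precedes it below -/
import Mathlib

section
/- Let B = E ⊕ F be a splitting of a Banach space into closed subspaces and let E' be a closed subspace with d_H(E, E') < |π_{E⊕F}|^{-1} (so that B = E' ⊕ F). Then: (i) |π_{E'⊕F}| ≤ |π_{E⊕F}| / (1 − |π_{E⊕F}| d_H(E, E')); and (ii) |π_{F⊕E'}|_E| ≤ 2 |π_{E'⊕F}| d_H(E, E'). -/
open MeasureTheory Filter Metric Module Submodule Set

noncomputable section

namespace BY

variable {B B' : Type*}

/-- The unit sphere of a subspace `E`. -/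
def subSphere [NormedAddCommGroup B] [NormedSpace ℝ B] (E : Submodule ℝ B) : Set B :=
  {v : B | v ∈ E ∧ ‖v‖ = 1}

/-- `d_H(E, E')`: the Hausdorff distance between the unit spheres of `E` and `E'`. -/
def dH [NormedAddCommGroup B] [NormedSpace ℝ B] (E E' : Submodule ℝ B) : ℝ :=
  Metric.hausdorffDist (subSphere E) (subSphere E')

/-- The supremum of `‖π x‖` over `x ∈ S`, where `π` is the projection onto `E` along `F`. -/
def projNormOn [NormedAddCommGroup B] [NormedSpace ℝ B] (E F : Submodule ℝ B)
    (h : IsCompl E F) (S : Set B) : ℝ :=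
  sSup ((fun x => ‖(E.linearProjOfIsCompl F h x : B)‖) '' S)

/-- `|π_{E⊕F}|`: the operator norm of the projection onto `E` along `F`. -/
def projNorm [NormedAddCommGroup B] [NormedSpace ℝ B] (E F : Submodule ℝ B)
    (h : IsCompl E F) : ℝ :=
  projNormOn E F h (Metric.closedBall 0 1)

/-- `α(E, F) = inf { ‖e - f‖ : e ∈ E, ‖e‖ = 1, f ∈ F }`. -/
def alphaAngle [NormedAddCommGroup B] [NormedSpace ℝ B] (E F : Submodule ℝ B) : ℝ :=
  sInf {r : ℝ | ∃ e ∈ E, ∃ f ∈ F, ‖e‖ = 1 ∧ r = ‖e - f‖}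

/-- `ω_k`: the volume of the Euclidean unit ball in `ℝ^k`. -/
def euclideanBallVol (k : ℕ) : ENNReal :=
  volume (Metric.closedBall (0 : EuclideanSpace ℝ (Fin k)) 1)

/-- `μ` is the induced volume `m_E` on the `k`-dimensional subspace `E`: the (unique) Haar
measure on `E` assigning mass `ω_k` to the unit ball of `E`. -/
def IsInducedVolume [NormedAddCommGroup B] [NormedSpace ℝ B] [MeasurableSpace B]
    (E : Submodule ℝ B) (k : ℕ) (μ : Measure E) : Prop :=
  Measure.IsAddHaarMeasure μ ∧ μ {v : E | ‖v‖ ≤ 1} = euclideanBallVol k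

/-- `det(A|E)`, computed with respect to induced volumes `μE` on `E` and `μF` on a
subspace `F` containing `A(E)`: the ratio `μF(A(B_E)) / μE(B_E)` where `B_E` is
the unit ball of `E`. -/
def detIn [NormedAddCommGroup B] [NormedSpace ℝ B] [NormedAddCommGroup B'] [NormedSpace ℝ B']
    [MeasurableSpace B] [MeasurableSpace B']
    (A : B →L[ℝ] B') (E : Submodule ℝ B) (F : Submodule ℝ B')
    (μE : Measure E) (μF : Measure F) : ℝ :=
  (μF {w : F | ∃ v : B, v ∈ E ∧ ‖v‖ ≤ 1 ∧ A v = (w : B')}).toReal /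
    (μE {v : E | ‖v‖ ≤ 1}).toReal

/-- `P[v₁, …, v_k]`: the parallelepiped spanned by the vectors `v i`. -/
def pped [AddCommGroup B] [Module ℝ B] {k : ℕ} (v : Fin k → B) : Set B :=
  {x : B | ∃ a : Fin k → ℝ, (∀ i, a i ∈ Set.Icc (0 : ℝ) 1) ∧ x = ∑ i, a i • v i}

/-- `N[v₁, …, v_k]`: the sum of the norms of the projections, within the span of the `v i`,
onto each `⟨v i⟩` along the span of the other basis vectors. -/
def Nquan [NormedAddCommGroup B] [NormedSpace ℝ B] {k : ℕ} (v : Fin k → B) : ℝ :=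
  ∑ i, sSup {r : ℝ | ∃ a : Fin k → ℝ, ‖∑ j, a j • v j‖ ≤ 1 ∧ r = ‖a i • v i‖}

/-- The operator norm of the restriction of `A` to the subspace `E`. -/
def opNormOnSub [NormedAddCommGroup B] [NormedSpace ℝ B] [NormedAddCommGroup B']
    [NormedSpace ℝ B'] (A : B →L[ℝ] B') (E : Submodule ℝ B) : ℝ :=
  sSup {r : ℝ | ∃ v ∈ E, ‖v‖ ≤ 1 ∧ r = ‖A v‖}

/-- The `n`-th iterate (`n ∈ ℤ`) of the invertible pair `(f, g)`, `g = f⁻¹`. -/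
def zIter {X : Type*} (f g : X → X) (n : ℤ) (x : X) : X :=
  if 0 ≤ n then f^[n.toNat] x else g^[(-n).toNat] x

/-- `ψ'(x) = sup_{n ∈ ℤ} e^{-|n| δ} ψ(f^n x)`. -/
def psiSup {X : Type*} (f g : X → X) (ψ : X → ℝ) (δ : ℝ) (x : X) : ℝ :=
  sSup (Set.range fun n : ℤ => Real.exp (-|(n : ℝ)| * δ) * ψ (zIter f g n x))

/-- The cocycle `T^n_x = T_{f^{n-1} x} ∘ ⋯ ∘ T_x`. -/
def cocycle {X : Type*} [NormedAddCommGroup B] [NormedSpace ℝ B]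
    (f : X → X) (T : X → B →L[ℝ] B) : ℕ → X → B →L[ℝ] B
  | 0, _ => ContinuousLinearMap.id ℝ B
  | n + 1, x => (cocycle f T n (f x)).comp (T x)

end BY

end
/-! Let `P` be the projection onto `E` along `F`, `p = |P|` and `d = d_H(E, E')`. Approximating
a unit vector of `E'` by a unit vector of `E` gives `‖P x‖ ≥ (1 - p d) ‖x‖` on `E'`. Hence
`E' ∩ F = 0`, and `P(E')` is a closed subspace of `E` approximating every `e ∈ E` within
`p r ‖e‖` for any `r > d`; as `p r < 1`, Riesz's lemma forces `P(E') = E`, i.e. `E' + F = B`.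
Since `P ∘ π_{E'⊕F} = P`, the lower bound yields (i). For (ii), `π_{F⊕E'} = 1 - π_{E'⊕F}`
vanishes on `E'`, so `‖π_{F⊕E'} v‖ ≤ (1 + |π_{E'⊕F}|) ‖v - u‖` for any `u ∈ E'`. -/

namespace BY

variable {B : Type*} [NormedAddCommGroup B] [NormedSpace ℝ B]

lemma le_of_forall_gt_of_continuous {f g : ℝ → ℝ} (hf : Continuous f) (hg : Continuous g)
    {d : ℝ} (h : ∀ r, d < r → f r ≤ g r) : f d ≤ g d :=
  le_of_tendsto_of_tendsto ((hf.tendsto d).mono_left nhdsWithin_le_nhds)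
    ((hg.tendsto d).mono_left nhdsWithin_le_nhds) (eventually_nhdsWithin_of_forall (s := Ioi d) h)

lemma dH_comm (E E' : Submodule ℝ B) : dH E E' = dH E' E :=
  hausdorffDist_comm

lemma dH_nonneg (E E' : Submodule ℝ B) : 0 ≤ dH E E' :=
  hausdorffDist_nonneg

lemma subSphere_nonempty {E : Submodule ℝ B} (hE : E ≠ ⊥) : (subSphere E).Nonempty := by
  obtain ⟨x, hxE, hx0⟩ := Submodule.exists_mem_ne_zero_of_ne_bot hE
  exact ⟨‖x‖⁻¹ • x, E.smul_mem _ hxE, norm_smul_inv_norm hx0⟩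

lemma isBounded_subSphere (E : Submodule ℝ B) : Bornology.IsBounded (subSphere E) :=
  (isBounded_sphere (x := (0 : B)) (r := 1)).subset fun _ hv => mem_sphere_zero_iff_norm.2 hv.2

lemma exists_mem_norm_eq_norm_sub_le {E E' : Submodule ℝ B} (hE : E ≠ ⊥) (hE' : E' ≠ ⊥)
    {x : B} (hx : x ∈ E) {r : ℝ} (hr : dH E E' < r) :
    ∃ u ∈ E', ‖u‖ = ‖x‖ ∧ ‖x - u‖ ≤ r * ‖x‖ := by
  rcases eq_or_ne x 0 with rfl | hx0
  · exact ⟨0, E'.zero_mem, by simp⟩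
  have hw : ‖x‖⁻¹ • x ∈ subSphere E := ⟨E.smul_mem _ hx, norm_smul_inv_norm hx0⟩
  have hfin := hausdorffEDist_ne_top_of_nonempty_of_bounded (subSphere_nonempty hE)
    (subSphere_nonempty hE') (isBounded_subSphere E) (isBounded_subSphere E')
  obtain ⟨w, ⟨hwE', hw1⟩, hdist⟩ := (infDist_lt_iff (subSphere_nonempty hE')).1
    ((infDist_le_hausdorffDist_of_mem hw hfin).trans_lt hr)
  refine ⟨‖x‖ • w, E'.smul_mem _ hwE', by rw [norm_smul, hw1, norm_norm, mul_one], ?_⟩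
  have hscale : x - ‖x‖ • w = ‖x‖ • (‖x‖⁻¹ • x - w) := by
    rw [smul_sub, smul_inv_smul₀ (norm_ne_zero_iff.2 hx0)]
  rw [hscale, norm_smul, norm_norm, mul_comm, ← dist_eq_norm]
  exact mul_le_mul_of_nonneg_right hdist.le (norm_nonneg x)

section ProjectionNorm

variable {E F : Submodule ℝ B} (h : IsCompl E F)

-- `linearProjOfIsCompl` in the definitions is a deprecated alias of `projectionOnto`, so the
-- lemmas below state everything with `E.projection F h = E.subtype ∘ₗ E.projectionOnto F h`.
lemma projNormOn_eq (S : Set B) :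
    projNormOn E F h S = sSup ((fun x => ‖E.projection F h x‖) '' S) :=
  rfl

lemma bddAbove_norm_projection [CompleteSpace B] (hEc : IsClosed (E : Set B))
    (hFc : IsClosed (F : Set B)) :
    BddAbove ((fun x => ‖E.projection F h x‖) '' closedBall 0 1) := by
  set P := E.projectionL F (h.isTopCompl_of_isClosed hEc hFc)
  refine ⟨‖P‖, ?_⟩
  rintro _ ⟨x, hx, rfl⟩
  calc ‖E.projection F h x‖ = ‖P x‖ := rfl
    _ ≤ ‖P‖ * ‖x‖ := P.le_opNorm x
    _ ≤ ‖P‖ := mul_le_of_le_one_right (norm_nonneg _) (mem_closedBall_zero_iff.1 hx)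

lemma norm_projection_le_projNorm [CompleteSpace B] (hEc : IsClosed (E : Set B))
    (hFc : IsClosed (F : Set B)) (x : B) :
    ‖E.projection F h x‖ ≤ projNorm E F h * ‖x‖ := by
  rcases eq_or_ne x 0 with rfl | hx0
  · simp
  have hx : ‖x‖⁻¹ • x ∈ closedBall (0 : B) 1 :=
    mem_closedBall_zero_iff.2 (norm_smul_inv_norm hx0).le
  have hle : ‖E.projection F h (‖x‖⁻¹ • x)‖ ≤ projNorm E F h :=
    le_csSup (bddAbove_norm_projection h hEc hFc) ⟨_, hx, rfl⟩
  rwa [map_smul, norm_smul, norm_inv, norm_norm, inv_mul_le_iff₀ (norm_pos_iff.2 hx0),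
    mul_comm] at hle

lemma one_le_projNorm [CompleteSpace B] (hEc : IsClosed (E : Set B))
    (hFc : IsClosed (F : Set B)) (hE : E ≠ ⊥) : 1 ≤ projNorm E F h := by
  obtain ⟨u, huE, hu1⟩ := subSphere_nonempty hE
  have hu : u ∈ closedBall (0 : B) 1 := mem_closedBall_zero_iff.2 hu1.le
  have hle : ‖E.projection F h u‖ ≤ projNorm E F h :=
    le_csSup (bddAbove_norm_projection h hEc hFc) ⟨_, hu, rfl⟩
  rwa [projection_apply_of_mem_left h huE, hu1] at hle

lemma projNorm_nonneg : 0 ≤ projNorm E F h :=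
  Real.sSup_nonneg (by rintro _ ⟨x, -, rfl⟩; exact norm_nonneg _)

variable {h} in
lemma projNorm_le {M : ℝ} (hM : 0 ≤ M) (hP : ∀ x, ‖E.projection F h x‖ ≤ M * ‖x‖) :
    projNorm E F h ≤ M := by
  refine csSup_le ⟨_, ⟨0, mem_closedBall_self zero_le_one, rfl⟩⟩ ?_
  rintro _ ⟨x, hx, rfl⟩
  exact (hP x).trans (mul_le_of_le_one_right hM (mem_closedBall_zero_iff.1 hx))

end ProjectionNorm

lemma isClosed_map_of_mul_norm_le {B' : Type*} [NormedAddCommGroup B'] [NormedSpace ℝ B']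
    [CompleteSpace B] {E : Submodule ℝ B} (hEc : IsClosed (E : Set B)) (f : B →L[ℝ] B')
    {c : ℝ} (hc : 0 < c) (hf : ∀ x ∈ E, c * ‖x‖ ≤ ‖f x‖) :
    IsClosed (E.map (f : B →ₗ[ℝ] B') : Set B') := by
  have := hEc.completeSpace_coe
  set g := f.comp E.subtypeL
  have hg : AntilipschitzWith ⟨c⁻¹, inv_nonneg.2 hc.le⟩ g :=
    g.antilipschitz_of_bound fun x => by
      change ‖x‖ ≤ c⁻¹ * ‖g x‖
      rw [← div_eq_inv_mul, le_div_iff₀' hc]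
      exact hf x x.2
  have hrange : (E.map (f : B →ₗ[ℝ] B') : Set B') = range g := by
    ext y
    simp [g]
  rw [hrange]
  exact hg.isClosed_range g.uniformContinuous

lemma le_of_forall_exists_norm_sub_le {S V : Submodule ℝ B} (hS : IsClosed (S : Set B))
    (hSV : S ≤ V) {θ : ℝ} (hθ : θ < 1) (h : ∀ x ∈ V, ∃ s ∈ S, ‖x - s‖ ≤ θ * ‖x‖) : V ≤ S := by
  by_contra hVS
  obtain ⟨x, hxV, hxS⟩ := Set.not_subset.1 hVS
  obtain ⟨r, hθr, hr1⟩ := exists_between hθ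
  obtain ⟨x₀, hx₀, hfar⟩ := riesz_lemma (F := S.comap V.subtype)
    (hS.preimage continuous_subtype_val) ⟨⟨x, hxV⟩, hxS⟩ hr1
  obtain ⟨s, hs, hnear⟩ := h x₀ x₀.2
  have hx₀0 : 0 < ‖x₀‖ := norm_pos_iff.2 fun h0 => hx₀ (h0 ▸ zero_mem _)
  exact ((hfar ⟨s, hSV hs⟩ hs).trans hnear).not_gt (mul_lt_mul_of_pos_right hθr hx₀0)

section Perturbation

variable {E F E' : Submodule ℝ B}

lemma projNorm_pos_of_dH_lt {h : IsCompl E F} (hd : dH E E' < (projNorm E F h)⁻¹) :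
    0 < projNorm E F h :=
  inv_pos.1 ((dH_nonneg E E').trans_lt hd)

lemma projNorm_mul_dH_lt_one {h : IsCompl E F} (hd : dH E E' < (projNorm E F h)⁻¹) :
    projNorm E F h * dH E E' < 1 := by
  have hp := projNorm_pos_of_dH_lt hd
  simpa [hp.ne'] using mul_lt_mul_of_pos_left hd hp

lemma projection_projection_of_isCompl (h : IsCompl E F) (h' : IsCompl E' F) (x : B) :
    E.projection F h (E'.projection F h' x) = E.projection F h x := by
  rw [projection_eq_self_sub_projection h'.symm, map_sub,
    (projection_apply_eq_zero_iff h).2 (projection_apply_mem _ x), sub_zero]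

lemma disjoint_of_mul_norm_le {h : IsCompl E F} {c : ℝ} (hc : 0 < c)
    (hlow : ∀ x ∈ E', c * ‖x‖ ≤ ‖E.projection F h x‖) : Disjoint E' F := by
  refine Submodule.disjoint_def.2 fun x hxE' hxF => norm_le_zero_iff.1 ?_
  have hx := hlow x hxE'
  rw [(projection_apply_eq_zero_iff h).2 hxF, norm_zero] at hx
  exact le_of_mul_le_mul_left (by rwa [mul_zero]) hc

lemma codisjoint_of_le_map {h : IsCompl E F} (hE : E ≤ E'.map (E.projection F h)) :
    Codisjoint E' F := by
  refine codisjoint_iff.2 (eq_top_iff.2 fun x _ => ?_)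
  obtain ⟨e, he, hPe⟩ := hE (projection_apply_mem h x)
  have hxe : x - e ∈ F := (projection_apply_eq_zero_iff h).1 (by rw [map_sub, hPe, sub_self])
  exact Submodule.mem_sup.2 ⟨e, he, x - e, hxe, add_sub_cancel e x⟩

variable [CompleteSpace B]

lemma mul_norm_le_norm_projection (hEc : IsClosed (E : Set B)) (hFc : IsClosed (F : Set B))
    (h : IsCompl E F) (hE : E ≠ ⊥) (hE' : E' ≠ ⊥) {x : B} (hx : x ∈ E') :
    (1 - projNorm E F h * dH E E') * ‖x‖ ≤ ‖E.projection F h x‖ := by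
  set p := projNorm E F h
  refine le_of_forall_gt_of_continuous (f := fun r => (1 - p * r) * ‖x‖)
    (g := fun _ => ‖E.projection F h x‖) (by fun_prop) (by fun_prop) fun r hr => ?_
  obtain ⟨u, huE, hnorm, hdist⟩ :=
    exists_mem_norm_eq_norm_sub_le hE' hE hx (dH_comm E E' ▸ hr)
  have hPxu : ‖E.projection F h x - u‖ ≤ p * (r * ‖x‖) := by
    rw [← projection_apply_of_mem_left h huE, ← map_sub]
    exact (norm_projection_le_projNorm h hEc hFc _).trans
      (mul_le_mul_of_nonneg_left hdist (projNorm_nonneg h))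
  have htri := norm_sub_norm_le u (E.projection F h x)
  rw [norm_sub_rev] at htri
  calc (1 - p * r) * ‖x‖ = ‖u‖ - p * (r * ‖x‖) := by rw [hnorm]; ring
    _ ≤ ‖E.projection F h x‖ := by linarith

lemma le_map_projection (hEc : IsClosed (E : Set B)) (hFc : IsClosed (F : Set B))
    (hE'c : IsClosed (E' : Set B)) (h : IsCompl E F) (hE : E ≠ ⊥) (hE' : E' ≠ ⊥)
    (hd : dH E E' < (projNorm E F h)⁻¹) : E ≤ E'.map (E.projection F h) := by
  set p := projNorm E F h
  have hp : 0 < p := projNorm_pos_of_dH_lt hd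
  obtain ⟨r, hdr, hrp⟩ := exists_between hd
  have hpr : p * r < 1 := by simpa [hp.ne'] using mul_lt_mul_of_pos_left hrp hp
  refine le_of_forall_exists_norm_sub_le ?_ ?_ hpr fun e he => ?_
  · exact isClosed_map_of_mul_norm_le hE'c (E.projectionL F (h.isTopCompl_of_isClosed hEc hFc))
      (sub_pos.2 (projNorm_mul_dH_lt_one hd))
      fun x hx => mul_norm_le_norm_projection hEc hFc h hE hE' hx
  · rintro _ ⟨x, -, rfl⟩
    exact projection_apply_mem h x
  · obtain ⟨u, hu, -, hdist⟩ := exists_mem_norm_eq_norm_sub_le hE hE' he hdr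
    refine ⟨E.projection F h u, ⟨u, hu, rfl⟩, ?_⟩
    calc ‖e - E.projection F h u‖ = ‖E.projection F h (e - u)‖ := by
          rw [map_sub, projection_apply_of_mem_left h he]
      _ ≤ p * ‖e - u‖ := norm_projection_le_projNorm h hEc hFc _
      _ ≤ p * (r * ‖e‖) := mul_le_mul_of_nonneg_left hdist hp.le
      _ = p * r * ‖e‖ := (mul_assoc _ _ _).symm

lemma isCompl_of_dH_lt (hEc : IsClosed (E : Set B)) (hFc : IsClosed (F : Set B))
    (hE'c : IsClosed (E' : Set B)) (h : IsCompl E F) (hE : E ≠ ⊥) (hE' : E' ≠ ⊥)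
    (hd : dH E E' < (projNorm E F h)⁻¹) : IsCompl E' F :=
  ⟨disjoint_of_mul_norm_le (sub_pos.2 (projNorm_mul_dH_lt_one hd))
      fun _ hx => mul_norm_le_norm_projection hEc hFc h hE hE' hx,
    codisjoint_of_le_map (le_map_projection hEc hFc hE'c h hE hE' hd)⟩

lemma projNorm_le_of_dH_lt (hEc : IsClosed (E : Set B)) (hFc : IsClosed (F : Set B))
    (h : IsCompl E F) (hE : E ≠ ⊥) (hE' : E' ≠ ⊥) (hd : dH E E' < (projNorm E F h)⁻¹)
    (h' : IsCompl E' F) :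
    projNorm E' F h' ≤ projNorm E F h / (1 - projNorm E F h * dH E E') := by
  have hc := sub_pos.2 (projNorm_mul_dH_lt_one hd)
  refine projNorm_le (div_nonneg (projNorm_nonneg h) hc.le) fun x => ?_
  rw [div_mul_eq_mul_div, le_div_iff₀' hc]
  calc (1 - projNorm E F h * dH E E') * ‖E'.projection F h' x‖
      ≤ ‖E.projection F h (E'.projection F h' x)‖ :=
        mul_norm_le_norm_projection hEc hFc h hE hE' (projection_apply_mem h' x)
    _ = ‖E.projection F h x‖ := by rw [projection_projection_of_isCompl]
    _ ≤ projNorm E F h * ‖x‖ := norm_projection_le_projNorm h hEc hFc x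

lemma norm_projection_symm_le (hE'c : IsClosed (E' : Set B)) (hFc : IsClosed (F : Set B))
    (h' : IsCompl E' F) {u : B} (hu : u ∈ E') (x : B) :
    ‖F.projection E' h'.symm x‖ ≤ (1 + projNorm E' F h') * ‖x - u‖ := by
  have hQu : F.projection E' h'.symm u = 0 := (projection_apply_eq_zero_iff _).2 hu
  calc ‖F.projection E' h'.symm x‖ = ‖(x - u) - E'.projection F h' (x - u)‖ := by
        rw [← projection_eq_self_sub_projection, map_sub, hQu, sub_zero]
    _ ≤ ‖x - u‖ + projNorm E' F h' * ‖x - u‖ :=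
        (norm_sub_le _ _).trans (add_le_add_right (norm_projection_le_projNorm h' hE'c hFc _) _)
    _ = (1 + projNorm E' F h') * ‖x - u‖ := by ring

lemma projNormOn_symm_le (hE'c : IsClosed (E' : Set B)) (hFc : IsClosed (F : Set B))
    (hE : E ≠ ⊥) (hE' : E' ≠ ⊥) (h' : IsCompl E' F) :
    projNormOn F E' h'.symm {v : B | v ∈ E ∧ ‖v‖ ≤ 1} ≤ 2 * projNorm E' F h' * dH E E' := by
  set p' := projNorm E' F h'
  have hp' : 1 ≤ p' := one_le_projNorm h' hE'c hFc hE'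
  rw [projNormOn_eq]
  refine csSup_le ⟨_, 0, ⟨E.zero_mem, by simp⟩, rfl⟩ ?_
  rintro _ ⟨v, ⟨hvE, hv1⟩, rfl⟩
  show ‖F.projection E' h'.symm v‖ ≤ 2 * p' * dH E E'
  refine le_of_forall_gt_of_continuous (f := fun _ => ‖F.projection E' h'.symm v‖)
    (g := fun r => 2 * p' * r) (by fun_prop) (by fun_prop) fun r hr => ?_
  obtain ⟨u, hu, -, hdist⟩ := exists_mem_norm_eq_norm_sub_le hE hE' hvE hr
  have hvu : ‖v - u‖ ≤ r :=
    hdist.trans (mul_le_of_le_one_right ((dH_nonneg E E').trans hr.le) hv1)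
  calc ‖F.projection E' h'.symm v‖ ≤ (1 + p') * ‖v - u‖ :=
        norm_projection_symm_le hE'c hFc h' hu v
    _ ≤ 2 * p' * r := mul_le_mul (by linarith) hvu (norm_nonneg _) (by linarith)

end Perturbation

end BY

/-- Lemma A.1 of the paper. Let `B = E ⊕ F` be a splitting into closed
subspaces, and `E'` a closed subspace with `d_H(E, E') < |π_{E⊕F}|⁻¹` (so that
`B = E' ⊕ F`). Then (i) `|π_{E'⊕F}| ≤ |π_{E⊕F}| / (1 - |π_{E⊕F}| d_H(E, E'))` and
(ii) `|π_{F⊕E'}|_E| ≤ 2 |π_{E'⊕F}| d_H(E, E')`. -/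
theorem statement12 {B : Type*} [NormedAddCommGroup B] [NormedSpace ℝ B] [CompleteSpace B]
    (E F E' : Submodule ℝ B)
    (hEc : IsClosed (E : Set B)) (hFc : IsClosed (F : Set B)) (hE'c : IsClosed (E' : Set B))
    (hEbot : E ≠ ⊥) (hE'bot : E' ≠ ⊥)
    (h : IsCompl E F)
    (hd : BY.dH E E' < (BY.projNorm E F h)⁻¹) :
    ∃ h' : IsCompl E' F,
      BY.projNorm E' F h' ≤
        BY.projNorm E F h / (1 - BY.projNorm E F h * BY.dH E E') ∧
      BY.projNormOn F E' h'.symm {v : B | v ∈ E ∧ ‖v‖ ≤ 1} ≤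
        2 * BY.projNorm E' F h' * BY.dH E E' := by
  have h' : IsCompl E' F := BY.isCompl_of_dH_lt hEc hFc hE'c h hEbot hE'bot hd
  exact ⟨h', BY.projNorm_le_of_dH_lt hEc hFc h hEbot hE'bot hd h',
    BY.projNormOn_symm_le hE'c hFc hEbot hE'bot h'⟩
end

section
/- Let B be a Banach space, m ∈ ℕ, and K > 0. There is a constant C = C(K, m) > 0 such that: if A : B → B is a bounded linear operator with |A| ≤ K, and E ⊂ B is an m-dimensional subspace on which A is injective, then |(A|_E)^{-1}| ≤ C / det(A|E); in fact, for every unit vector v ∈ E one has det(A|E) ≤ m^m |A|_E|^{m−1} |Av|, so that one may take |(A|_E)^{-1}| ≤ m^m K^{m−1} / det(A|E). -/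
/-! Let `M = |A|_E|`, let `v ∈ E` be a unit vector and `ψ` a norm-one functional with `ψ v = 1`.
Writing `u = ψ u • v + (u - ψ u • v)` shows that `A(B_E)` lies in the slab
`{t • A v + h : |t| ≤ 1, ψ' h = 0, ‖h‖ ≤ 2M}` of `F = A(E)`, where `ψ' = ψ ∘ (A|_E)⁻¹`.
In the coordinates `F ≃ ℝ × ker ψ'` of this splitting, Fubini shows that the slab has
`m ‖A v‖ (2M)^(m-1)` times the volume of the double cone `{‖A v‖ |t| + ‖h‖ ≤ 1}`, and the cone lies
in the unit ball of `F`. Since both unit balls have measure `ω_m`, this gives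
`det(A|E) ≤ m 2^(m-1) M^(m-1) ‖A v‖ ≤ m^m M^(m-1) ‖A v‖`, and rescaling `v` bounds `(A|_E)⁻¹`. -/

open MeasureTheory Filter Metric Module Submodule Set

theorem integral_one_sub_mul_pow (n : ℕ) {c : ℝ} (hc : c ≠ 0) :
    ∫ t in (0 : ℝ)..c⁻¹, (1 - c * t) ^ n = c⁻¹ / (n + 1) := by
  rw [intervalIntegral.integral_comp_mul_left (fun t => (1 - t) ^ n) hc, mul_zero,
    mul_inv_cancel₀ hc, intervalIntegral.integral_comp_sub_left (fun t => t ^ n), integral_pow]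
  simp only [sub_zero, sub_self, one_pow, zero_pow n.succ_ne_zero, smul_eq_mul]
  ring

theorem integral_one_sub_mul_abs_pow (n : ℕ) {c : ℝ} (hc : 0 < c) :
    ∫ t in -c⁻¹..c⁻¹, (1 - c * |t|) ^ n = 2 * (c⁻¹ / (n + 1)) := by
  have hcont : Continuous fun t : ℝ => (1 - c * |t|) ^ n := by fun_prop
  have hneg : ∫ t in -c⁻¹..0, (1 - c * |t|) ^ n = ∫ t in 0..c⁻¹, (1 - c * |t|) ^ n := by
    simpa using (intervalIntegral.integral_comp_neg (a := 0) (b := c⁻¹)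
      (fun t => (1 - c * |t|) ^ n)).symm
  have hpos : ∫ t in 0..c⁻¹, (1 - c * |t|) ^ n = ∫ t in 0..c⁻¹, (1 - c * t) ^ n :=
    intervalIntegral.integral_congr fun t ht => by
      rw [uIcc_of_le (by positivity)] at ht
      simp only [abs_of_nonneg ht.1]
  rw [← intervalIntegral.integral_add_adjacent_intervals (b := 0) (hcont.intervalIntegrable _ _)
    (hcont.intervalIntegrable _ _), hneg, hpos, integral_one_sub_mul_pow n hc.ne', two_mul]

theorem lintegral_Ioo_one_sub_mul_abs_pow (n : ℕ) {c : ℝ} (hc : 0 < c) :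
    ∫⁻ t in Ioo (-c⁻¹) c⁻¹, ENNReal.ofReal ((1 - c * |t|) ^ n)
      = ENNReal.ofReal (2 * (c⁻¹ / (n + 1))) := by
  have hcont : Continuous fun t : ℝ => (1 - c * |t|) ^ n := by fun_prop
  rw [← ofReal_integral_eq_lintegral_ofReal, ← integral_Ioc_eq_integral_Ioo,
    ← intervalIntegral.integral_of_le (by linarith [inv_pos.mpr hc]),
    integral_one_sub_mul_abs_pow n hc]
  · exact hcont.integrableOn_Icc.mono_set Ioo_subset_Icc_self
  · refine (ae_restrict_iff' measurableSet_Ioo).mpr (ae_of_all _ fun t ht => ?_)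
    have : c * |t| < 1 := by
      rw [← lt_div_iff₀' hc, one_div]; exact abs_lt.mpr ht
    exact pow_nonneg (by linarith) n

section ProdCone

variable {H : Type*} [NormedAddCommGroup H] [NormedSpace ℝ H] [FiniteDimensional ℝ H]
  [MeasurableSpace H] [BorelSpace H]

theorem le_volume_prod_cone (μ : Measure H) [μ.IsAddHaarMeasure] {c : ℝ} (hc : 0 < c) :
    ENNReal.ofReal (2 * (c⁻¹ / (finrank ℝ H + 1))) * μ (closedBall 0 1)
      ≤ (volume.prod μ) {p : ℝ × H | c * |p.1| + ‖p.2‖ ≤ 1} := by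
  have hmeas : MeasurableSet {p : ℝ × H | c * |p.1| + ‖p.2‖ ≤ 1} :=
    measurableSet_le (by fun_prop) measurable_const
  have hslice : ∀ t ∈ Ioo (-c⁻¹) c⁻¹, μ (Prod.mk t ⁻¹' {p : ℝ × H | c * |p.1| + ‖p.2‖ ≤ 1})
      = ENNReal.ofReal ((1 - c * |t|) ^ finrank ℝ H) * μ (closedBall 0 1) := by
    intro t ht
    have : c * |t| < 1 := by
      rw [← lt_div_iff₀' hc, one_div]; exact abs_lt.mpr ht
    rw [← Measure.addHaar_closedBall' μ 0 (by linarith)]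
    congr 1
    ext h
    simp only [mem_preimage, mem_ofPred_eq, mem_closedBall_zero_iff]
    constructor <;> intro <;> linarith
  rw [Measure.prod_apply hmeas, ← lintegral_Ioo_one_sub_mul_abs_pow _ hc,
    ← lintegral_mul_const _ (by fun_prop), ← setLIntegral_congr_fun measurableSet_Ioo hslice]
  exact setLIntegral_le_lintegral _ _

theorem addHaar_slab_le_mul_cone (ρ : Measure (ℝ × H)) [ρ.IsAddHaarMeasure] {c R : ℝ}
    (hc : 0 < c) (hR : 0 ≤ R) :
    ρ (Icc (-1) 1 ×ˢ closedBall 0 R)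
      ≤ ENNReal.ofReal ((finrank ℝ H + 1) * c * R ^ finrank ℝ H)
        * ρ {p : ℝ × H | c * |p.1| + ‖p.2‖ ≤ 1} := by
  set μ : Measure H := Measure.addHaar
  rw [Measure.isAddLeftInvariant_eq_smul ρ (volume.prod μ)]
  simp only [Measure.smul_apply, ENNReal.smul_def, smul_eq_mul]
  rw [mul_left_comm]
  gcongr
  rw [Measure.prod_prod, Real.volume_Icc, Measure.addHaar_closedBall' μ 0 hR]
  calc ENNReal.ofReal (1 - -1) * (ENNReal.ofReal (R ^ finrank ℝ H) * μ (closedBall 0 1))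
      = ENNReal.ofReal ((finrank ℝ H + 1) * c * R ^ finrank ℝ H)
          * (ENNReal.ofReal (2 * (c⁻¹ / (finrank ℝ H + 1))) * μ (closedBall 0 1)) := by
        rw [← mul_assoc, ← mul_assoc, ← ENNReal.ofReal_mul (by positivity),
          ← ENNReal.ofReal_mul (by positivity)]
        congr 2
        field_simp
        ring
    _ ≤ _ := by gcongr; exact le_volume_prod_cone μ hc

end ProdCone

def LinearMap.equivProdKerOfApplyEqOne {R M : Type*} [CommRing R] [AddCommGroup M] [Module R M]
    (ψ : M →ₗ[R] R) {w₀ : M} (h : ψ w₀ = 1) : M ≃ₗ[R] R × LinearMap.ker ψ where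
  toFun w := (ψ w, ⟨w - ψ w • w₀, by simp [h]⟩)
  invFun p := p.1 • w₀ + p.2
  map_add' u w := by ext <;> simp [add_smul]; abel
  map_smul' r w := by ext <;> simp [smul_sub, mul_smul]
  left_inv w := by simp
  right_inv p := by ext <;> simp [h]

section Slab

variable {V : Type*} [NormedAddCommGroup V] [NormedSpace ℝ V] [FiniteDimensional ℝ V]
  [MeasurableSpace V] [BorelSpace V]

theorem addHaar_slab_le (μ : Measure V) [μ.IsAddHaarMeasure] (ψ : V →ₗ[ℝ] ℝ) {w₀ : V}
    (h : ψ w₀ = 1) {R : ℝ} (hR : 0 ≤ R) :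
    μ {w | |ψ w| ≤ 1 ∧ ‖w - ψ w • w₀‖ ≤ R}
      ≤ ENNReal.ofReal (finrank ℝ V * ‖w₀‖ * R ^ (finrank ℝ V - 1)) * μ (closedBall 0 1) := by
  let e := (ψ.equivProdKerOfApplyEqOne h).toContinuousLinearEquiv
  let me := e.toHomeomorph.toMeasurableEquiv
  have : (μ.map me).IsAddHaarMeasure := e.isAddHaarMeasure_map μ
  have hrank : finrank ℝ V = finrank ℝ (LinearMap.ker ψ) + 1 := by
    rw [e.toLinearEquiv.finrank_eq, finrank_prod, finrank_self, add_comm]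
  have hw₀ : 0 < ‖w₀‖ := norm_pos_iff.mpr (by rintro rfl; simp at h)
  have hslab : {w | |ψ w| ≤ 1 ∧ ‖w - ψ w • w₀‖ ≤ R}
      = me ⁻¹' (Icc (-1) 1 ×ˢ closedBall 0 R) := by
    ext w
    simp [me, e, LinearMap.equivProdKerOfApplyEqOne, abs_le]
  have hcone : me ⁻¹' {p | ‖w₀‖ * |p.1| + ‖p.2‖ ≤ 1} ⊆ closedBall 0 1 := by
    intro w hw
    simp only [mem_preimage, mem_ofPred_eq] at hw
    rw [mem_closedBall_zero_iff]
    calc ‖w‖ = ‖ψ w • w₀ + (w - ψ w • w₀)‖ := by rw [add_sub_cancel]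
      _ ≤ ‖w₀‖ * |ψ w| + ‖w - ψ w • w₀‖ := by
        grw [norm_add_le, norm_smul, Real.norm_eq_abs, mul_comm]
      _ ≤ 1 := hw
  rw [hslab, ← MeasurableEquiv.map_apply]
  calc (μ.map me) (Icc (-1) 1 ×ˢ closedBall 0 R)
      ≤ ENNReal.ofReal
          ((finrank ℝ (LinearMap.ker ψ) + 1) * ‖w₀‖ * R ^ finrank ℝ (LinearMap.ker ψ))
        * (μ.map me) {p | ‖w₀‖ * |p.1| + ‖p.2‖ ≤ 1} := addHaar_slab_le_mul_cone _ hw₀ hR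
    _ ≤ _ := by
      rw [MeasurableEquiv.map_apply, hrank]
      push_cast
      gcongr

end Slab

theorem Nat.mul_two_pow_pred_le_self_pow (m : ℕ) : m * 2 ^ (m - 1) ≤ m ^ m := by
  rcases m with _ | _ | k
  · simp
  · simp
  · rw [Nat.add_sub_cancel, _root_.pow_succ' (k + 2) (k + 1)]
    gcongr
    omega

noncomputable def LinearMap.equivMapOfDisjointKer {R M M₂ : Type*} [Ring R] [AddCommGroup M]
    [AddCommGroup M₂] [Module R M] [Module R M₂] (f : M →ₗ[R] M₂) {p : Submodule R M}
    (h : Disjoint p (LinearMap.ker f)) : p ≃ₗ[R] p.map f :=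
  (LinearEquiv.ofInjective (f.domRestrict p) (LinearMap.injective_domRestrict_iff.mpr h)).trans
    (LinearEquiv.ofEq _ _ (LinearMap.range_domRestrict p f))

@[simp]
theorem LinearMap.coe_equivMapOfDisjointKer_apply {R M M₂ : Type*} [Ring R] [AddCommGroup M]
    [AddCommGroup M₂] [Module R M] [Module R M₂] (f : M →ₗ[R] M₂) {p : Submodule R M}
    (h : Disjoint p (LinearMap.ker f)) (x : p) : (f.equivMapOfDisjointKer h x : M₂) = f x :=
  rfl

theorem LinearMap.mul_norm_le_of_forall_norm_eq_one {B B' : Type*} [NormedAddCommGroup B]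
    [NormedSpace ℝ B] [NormedAddCommGroup B'] [NormedSpace ℝ B'] (f : B →ₗ[ℝ] B')
    {E : Submodule ℝ B} {c d : ℝ} (h : ∀ v ∈ E, ‖v‖ = 1 → d ≤ c * ‖f v‖) {v : B} (hv : v ∈ E) :
    d * ‖v‖ ≤ c * ‖f v‖ := by
  rcases eq_or_ne v 0 with rfl | hv0
  · simp
  have hunit := h _ (E.smul_mem ‖v‖⁻¹ hv) (norm_smul_inv_norm hv0)
  rwa [map_smul, norm_smul, norm_inv, norm_norm, mul_left_comm, ← div_eq_inv_mul,
    le_div_iff₀ (norm_pos_iff.mpr hv0)] at hunit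

namespace BY

section OpNormOnSub

variable {B B' : Type*} [NormedAddCommGroup B] [NormedSpace ℝ B] [NormedAddCommGroup B']
  [NormedSpace ℝ B'] (A : B →L[ℝ] B') {E : Submodule ℝ B}

theorem norm_apply_le_opNormOnSub {u : B} (hu : u ∈ E) (hu1 : ‖u‖ ≤ 1) :
    ‖A u‖ ≤ opNormOnSub A E :=
  le_csSup ⟨‖A‖, by rintro r ⟨v, -, hv, rfl⟩; exact A.unit_le_opNorm v hv⟩ ⟨u, hu, hu1, rfl⟩

theorem opNormOnSub_nonneg : 0 ≤ opNormOnSub A E :=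
  (norm_nonneg _).trans (norm_apply_le_opNormOnSub A E.zero_mem (by simp))

theorem opNormOnSub_le_opNorm : opNormOnSub A E ≤ ‖A‖ :=
  csSup_le ⟨_, 0, E.zero_mem, by simp, rfl⟩ (by
    rintro r ⟨v, -, hv, rfl⟩; exact A.unit_le_opNorm v hv)

theorem norm_apply_le_opNormOnSub_mul {u : B} (hu : u ∈ E) : ‖A u‖ ≤ opNormOnSub A E * ‖u‖ := by
  rcases eq_or_ne u 0 with rfl | hu0
  · simp
  have hunit := norm_apply_le_opNormOnSub A (E.smul_mem ‖u‖⁻¹ hu) (norm_smul_inv_norm hu0).le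
  rwa [map_smul, norm_smul, norm_inv, norm_norm, ← div_eq_inv_mul,
    div_le_iff₀ (norm_pos_iff.mpr hu0)] at hunit

end OpNormOnSub

theorem euclideanBallVol_ne_top (k : ℕ) : euclideanBallVol k ≠ ⊤ :=
  measure_closedBall_lt_top.ne

theorem euclideanBallVol_toReal_pos (k : ℕ) : 0 < (euclideanBallVol k).toReal :=
  ENNReal.toReal_pos (measure_closedBall_pos _ _ one_pos).ne' (euclideanBallVol_ne_top k)

section DetIn

variable {B B' : Type*} [NormedAddCommGroup B] [NormedSpace ℝ B] [NormedAddCommGroup B']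
  [NormedSpace ℝ B'] {A : B →L[ℝ] B'} {E : Submodule ℝ B}

theorem setOf_exists_apply_eq_eq_image (hE : Disjoint E (LinearMap.ker A.toLinearMap)) :
    {w : E.map A.toLinearMap | ∃ v : B, v ∈ E ∧ ‖v‖ ≤ 1 ∧ A v = (w : B')}
      = A.toLinearMap.equivMapOfDisjointKer hE '' closedBall 0 1 := by
  ext w
  constructor
  · rintro ⟨v, hv, hv1, hAv⟩
    exact ⟨⟨v, hv⟩, by simpa using hv1, Subtype.ext hAv⟩
  · rintro ⟨u, hu, rfl⟩
    exact ⟨u, u.2, by simpa using hu, rfl⟩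

theorem addHaar_image_closedBall_le [MeasurableSpace B'] [BorelSpace B'] [FiniteDimensional ℝ E]
    (hE : Disjoint E (LinearMap.ker A.toLinearMap)) (ν : Measure (E.map A.toLinearMap))
    [ν.IsAddHaarMeasure] {v : B} (hv : v ∈ E) (hv1 : ‖v‖ = 1) :
    ν (A.toLinearMap.equivMapOfDisjointKer hE '' closedBall 0 1)
      ≤ ENNReal.ofReal (finrank ℝ E * ‖A v‖ * (2 * opNormOnSub A E) ^ (finrank ℝ E - 1))
        * ν (closedBall 0 1) := by
  obtain ⟨ψ, hψ1, hψv⟩ := exists_dual_vector ℝ v (by simp [hv1])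
  set φ := A.toLinearMap.equivMapOfDisjointKer hE
  let ψF : E.map A.toLinearMap →ₗ[ℝ] ℝ := ψ.toLinearMap ∘ₗ E.subtype ∘ₗ φ.symm.toLinearMap
  have hψF : ∀ u : E, ψF (φ u) = ψ u := fun u => by simp [ψF]
  have hψu : ∀ u : B, ‖u‖ ≤ 1 → |ψ u| ≤ 1 := fun u hu => by
    simpa using ψ.le_of_opNorm_le_of_le hψ1.le hu
  have hsub : φ '' closedBall 0 1
      ⊆ {w | |ψF w| ≤ 1 ∧ ‖w - ψF w • φ ⟨v, hv⟩‖ ≤ 2 * opNormOnSub A E} := by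
    rintro _ ⟨u, hu, rfl⟩
    rw [mem_closedBall_zero_iff] at hu
    refine ⟨by rw [hψF]; exact hψu u hu, ?_⟩
    rw [hψF, ← map_smul, ← map_sub]
    calc ‖φ (u - ψ u • ⟨v, hv⟩)‖ = ‖A ((u : B) - ψ u • v)‖ := by simp [φ]
      _ ≤ opNormOnSub A E * ‖(u : B) - ψ u • v‖ :=
        norm_apply_le_opNormOnSub_mul A (sub_mem u.2 (E.smul_mem _ hv))
      _ ≤ opNormOnSub A E * 2 := by
        gcongr
        · exact opNormOnSub_nonneg A
        · grw [norm_sub_le, norm_smul, Real.norm_eq_abs, hψu u hu, hv1]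
          linarith [show ‖(u : B)‖ ≤ 1 from hu]
      _ = 2 * opNormOnSub A E := mul_comm _ _
  grw [hsub, addHaar_slab_le ν ψF (by simpa [hψF, hv1] using hψv)
    (mul_nonneg zero_le_two (opNormOnSub_nonneg A))]
  simp [φ, φ.finrank_eq]

variable [MeasurableSpace B] [MeasurableSpace B'] {μE : Measure E}
  {ν : Measure (E.map A.toLinearMap)} {k : ℕ}

theorem detIn_eq (hE : Disjoint E (LinearMap.ker A.toLinearMap))
    (hμE : IsInducedVolume E k μE) :
    detIn A E (E.map A.toLinearMap) μE ν
      = (ν (A.toLinearMap.equivMapOfDisjointKer hE '' closedBall 0 1)).toReal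
        / (euclideanBallVol k).toReal := by
  rw [detIn, hμE.2, setOf_exists_apply_eq_eq_image hE]

theorem detIn_pos [BorelSpace B'] [FiniteDimensional ℝ E]
    (hE : Disjoint E (LinearMap.ker A.toLinearMap)) (hμE : IsInducedVolume E k μE)
    (hν : IsInducedVolume (E.map A.toLinearMap) k ν) :
    0 < detIn A E (E.map A.toLinearMap) μE ν := by
  have := hν.1
  let φ := (A.toLinearMap.equivMapOfDisjointKer hE).toContinuousLinearEquiv
  rw [detIn_eq hE hμE]
  refine div_pos (ENNReal.toReal_pos ?_ ?_) (euclideanBallVol_toReal_pos k)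
  · exact ((φ.isOpenMap _ isOpen_ball).measure_pos ν ((nonempty_ball.mpr one_pos).image _)
      |>.trans_le (measure_mono (image_mono ball_subset_closedBall))).ne'
  · exact ((isCompact_closedBall 0 1).image φ.continuous).measure_lt_top.ne

theorem detIn_le [BorelSpace B'] [FiniteDimensional ℝ E]
    (hE : Disjoint E (LinearMap.ker A.toLinearMap)) (hμE : IsInducedVolume E k μE)
    (hν : IsInducedVolume (E.map A.toLinearMap) k ν) {v : B} (hv : v ∈ E) (hv1 : ‖v‖ = 1) :
    detIn A E (E.map A.toLinearMap) μE ν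
      ≤ (finrank ℝ E : ℝ) ^ finrank ℝ E * opNormOnSub A E ^ (finrank ℝ E - 1) * ‖A v‖ := by
  have := hν.1
  have hball : ν (closedBall 0 1) = euclideanBallVol k := by
    rw [← hν.2]
    congr 1
    ext
    simp
  have hbound := addHaar_image_closedBall_le hE ν hv hv1
  rw [hball] at hbound
  rw [detIn_eq hE hμE, div_le_iff₀ (euclideanBallVol_toReal_pos k)]
  set m := finrank ℝ E
  set M := opNormOnSub A E
  have hM := opNormOnSub_nonneg A (E := E)
  calc _ ≤ m * ‖A v‖ * (2 * M) ^ (m - 1) * (euclideanBallVol k).toReal := by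
        have hD : 0 ≤ m * ‖A v‖ * (2 * M) ^ (m - 1) := by positivity
        simpa [ENNReal.toReal_mul, ENNReal.toReal_ofReal hD] using ENNReal.toReal_mono
          (ENNReal.mul_ne_top ENNReal.ofReal_ne_top (euclideanBallVol_ne_top k)) hbound
    _ ≤ m ^ m * M ^ (m - 1) * ‖A v‖ * (euclideanBallVol k).toReal := by
        gcongr ?_ * _
        calc m * ‖A v‖ * (2 * M) ^ (m - 1) = (m * 2 ^ (m - 1) : ℕ) * M ^ (m - 1) * ‖A v‖ := by
              push_cast
              ring
          _ ≤ (m ^ m : ℕ) * M ^ (m - 1) * ‖A v‖ := by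
              gcongr
              exact Nat.mul_two_pow_pred_le_self_pow m
          _ = _ := by push_cast; rfl

end DetIn

end BY

theorem statement17_general {B : Type*} [NormedAddCommGroup B] [NormedSpace ℝ B]
    [MeasurableSpace B] [BorelSpace B]
    (m : ℕ) (K : ℝ) (hK : 0 < K) :
    ∃ C > (0 : ℝ),
      ∀ (A : B →L[ℝ] B) (E : Submodule ℝ B) [FiniteDimensional ℝ E],
        Module.finrank ℝ E = m → ‖A‖ ≤ K → (∀ v ∈ E, A v = 0 → v = 0) →
        ∀ (μE : MeasureTheory.Measure E)
          (ν : MeasureTheory.Measure (E.map A.toLinearMap)),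
          BY.IsInducedVolume E m μE →
          BY.IsInducedVolume (E.map A.toLinearMap) m ν →
          (∀ v ∈ E, ‖v‖ ≤ (C / BY.detIn A E (E.map A.toLinearMap) μE ν) * ‖A v‖) ∧
          (∀ v ∈ E, ‖v‖ = 1 →
            BY.detIn A E (E.map A.toLinearMap) μE ν ≤
              (m : ℝ) ^ m * BY.opNormOnSub A E ^ (m - 1) * ‖A v‖) ∧
          (∀ v ∈ E, ‖v‖ ≤
            ((m : ℝ) ^ m * K ^ (m - 1) / BY.detIn A E (E.map A.toLinearMap) μE ν) *
              ‖A v‖) := by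
  refine ⟨(m : ℝ) ^ m * K ^ (m - 1), mul_pos ?_ (pow_pos hK _), ?_⟩
  · rcases m.eq_zero_or_pos with rfl | hm
    · simp
    · positivity
  intro A E _ hrank hAK hinj μE ν hμE hν
  subst hrank
  have hE : Disjoint E (LinearMap.ker A.toLinearMap) := Submodule.disjoint_def.mpr hinj
  have hdet : ∀ v ∈ E, ‖v‖ = 1 → BY.detIn A E (E.map A.toLinearMap) μE ν
      ≤ (finrank ℝ E : ℝ) ^ finrank ℝ E * BY.opNormOnSub A E ^ (finrank ℝ E - 1) * ‖A v‖ :=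
    fun v hv hv1 => BY.detIn_le hE hμE hν hv hv1
  have hdetK : ∀ v ∈ E, ‖v‖ = 1 → BY.detIn A E (E.map A.toLinearMap) μE ν
      ≤ (finrank ℝ E : ℝ) ^ finrank ℝ E * K ^ (finrank ℝ E - 1) * ‖A v‖ := fun v hv hv1 => by
    have := BY.opNormOnSub_nonneg A (E := E)
    grw [hdet v hv hv1, BY.opNormOnSub_le_opNorm, hAK]
  have hinv : ∀ v ∈ E, ‖v‖ ≤ ((finrank ℝ E : ℝ) ^ finrank ℝ E * K ^ (finrank ℝ E - 1)
      / BY.detIn A E (E.map A.toLinearMap) μE ν) * ‖A v‖ := fun v hv => by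
    rw [div_mul_eq_mul_div, le_div_iff₀ (BY.detIn_pos hE hμE hν), mul_comm]
    exact A.toLinearMap.mul_norm_le_of_forall_norm_eq_one hdetK hv
  exact ⟨hinv, hdet, hinv⟩

/-- from the proof of Corollary 3.4 of the paper. Let `B` be a Banach
space, `m ∈ ℕ`, `K > 0`. There is `C = C(K, m) > 0` such that: if `A : B → B` is a bounded
operator with `|A| ≤ K` and `E` is an `m`-dimensional subspace on which `A` is injective,
then `|(A|_E)⁻¹| ≤ C / det(A|E)`; in fact for every unit vector `v ∈ E`,
`det(A|E) ≤ m^m |A|_E|^{m-1} |Av|`, so that one may take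
`|(A|_E)⁻¹| ≤ m^m K^{m-1} / det(A|E)`. -/
theorem statement17 {B : Type*} [NormedAddCommGroup B] [NormedSpace ℝ B] [CompleteSpace B]
    [MeasurableSpace B] [BorelSpace B]
    (m : ℕ) (K : ℝ) (hK : 0 < K) :
    ∃ C > (0 : ℝ),
      ∀ (A : B →L[ℝ] B) (E : Submodule ℝ B) [FiniteDimensional ℝ E],
        Module.finrank ℝ E = m → ‖A‖ ≤ K → (∀ v ∈ E, A v = 0 → v = 0) →
        ∀ (μE : MeasureTheory.Measure E)
          (ν : MeasureTheory.Measure (E.map A.toLinearMap)),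
          BY.IsInducedVolume E m μE →
          BY.IsInducedVolume (E.map A.toLinearMap) m ν →
          (∀ v ∈ E, ‖v‖ ≤ (C / BY.detIn A E (E.map A.toLinearMap) μE ν) * ‖A v‖) ∧
          (∀ v ∈ E, ‖v‖ = 1 →
            BY.detIn A E (E.map A.toLinearMap) μE ν ≤
              (m : ℝ) ^ m * BY.opNormOnSub A E ^ (m - 1) * ‖A v‖) ∧
          (∀ v ∈ E, ‖v‖ ≤
            ((m : ℝ) ^ m * K ^ (m - 1) / BY.detIn A E (E.map A.toLinearMap) μE ν) *
              ‖A v‖) :=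
  statement17_general m K hK
end
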